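/- (Transferability of an attack on the surrogate g to the victim f.) Let 𝕏 be a finite global context set, 𝒳 ⊆ 𝕏 a nonempty topic subset with complement 𝒳' = 𝕏 \ 𝒳, and let f and g be two embedding maps from contexts into real inner product spaces. Assume f is ε_f-p_f-Precise over 𝒳, and assume ε_g > 0 and d' ∈ 𝕏 satisfies max_{X ∈ 𝒳} sim_g(d', X) ≤ (min_{X_i, X_j ∈ 𝒳} sim_g(X_i, X_j)) − ε_g. Then d' ∈ 𝒳', and there exists a subset S ⊆ 𝒳' with |S| ≥ p_f · |𝒳'| such that whenever d' ∈ S, for every query q ∈ 𝒳 one has sim_f(d', q) ≤ (min_{X_i, X_j ∈ 𝒳} sim_f(X_i, X_j)) − ε_f. -/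

import Mathlib

open scoped Classical

/-- Cosine similarity of the embeddings of two contexts under the embedding map `f`. -/
noncomputable def sim {C E : Type*} [NormedAddCommGroup E] [InnerProductSpace ℝ E]
    (f : C → E) (x y : C) : ℝ :=
  (inner ℝ (f x) (f y) : ℝ) / (‖f x‖ * ‖f y‖)

/-- The embedding map `f` is `ε`-`p`-Precise over the topic `𝒳 ⊆ 𝕏`: there is a witness
subset `Xε` of the complement `𝒳' = 𝕏 \ 𝒳` of relative size at least `p` such that
within-topic similarities exceed topic-to-witness similarities by at least `ε`. -/
def IsPrecise {C E : Type*} [DecidableEq C] [NormedAddCommGroup E] [InnerProductSpace ℝ E]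
    (f : C → E) (𝕏 𝒳 : Finset C) (ε p : ℝ) : Prop :=
  ∃ Xε : Finset C, Xε ⊆ 𝕏 \ 𝒳 ∧ p * (((𝕏 \ 𝒳).card : ℝ)) ≤ (Xε.card : ℝ) ∧
    ∀ Xi ∈ 𝒳, ∀ Xj ∈ 𝒳, ∀ Xk ∈ 𝒳, ∀ X' ∈ Xε, sim f Xk X' + ε ≤ sim f Xi Xj

theorem sim_comm {C E : Type*} [NormedAddCommGroup E] [InnerProductSpace ℝ E]
    (f : C → E) (x y : C) : sim f x y = sim f y x := by
  rw [sim, sim, real_inner_comm, mul_comm]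

theorem notMem_of_sup'_le_inf'_sub {α β : Type*} [AddCommGroup β] [LinearOrder β]
    [IsOrderedAddMonoid β] (s : α → α → β) {S : Finset α} (hS : S.Nonempty) {ε : β}
    (hε : 0 < ε) {x : α}
    (h : S.sup' hS (s x) ≤ (S ×ˢ S).inf' (hS.product hS) (fun p => s p.1 p.2) - ε) :
    x ∉ S := by
  intro hx
  have hsup : s x x ≤ S.sup' hS (s x) := Finset.le_sup' _ hx
  have hinf : (S ×ˢ S).inf' (hS.product hS) (fun p => s p.1 p.2) ≤ s x x :=
    Finset.inf'_le (fun p => s p.1 p.2) (Finset.mk_mem_product hx hx)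
  refine lt_irrefl (S.sup' hS (s x)) ?_
  calc S.sup' hS (s x)
      ≤ (S ×ˢ S).inf' (hS.product hS) (fun p => s p.1 p.2) - ε := h
    _ ≤ s x x - ε := sub_le_sub_right hinf ε
    _ ≤ S.sup' hS (s x) - ε := sub_le_sub_right hsup ε
    _ < S.sup' hS (s x) := sub_lt_self _ hε

theorem sim_le_inf'_sub_of_mem_witness {C E : Type*} [NormedAddCommGroup E]
    [InnerProductSpace ℝ E] (f : C → E) {𝒳 Xε : Finset C} (h𝒳 : 𝒳.Nonempty) {ε : ℝ}
    (hgap : ∀ Xi ∈ 𝒳, ∀ Xj ∈ 𝒳, ∀ Xk ∈ 𝒳, ∀ X' ∈ Xε, sim f Xk X' + ε ≤ sim f Xi Xj)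
    {X' q : C} (hX' : X' ∈ Xε) (hq : q ∈ 𝒳) :
    sim f X' q ≤ (𝒳 ×ˢ 𝒳).inf' (h𝒳.product h𝒳) (fun pr => sim f pr.1 pr.2) - ε := by
  refine le_sub_iff_add_le.mpr (Finset.le_inf' _ _ fun pr hpr => ?_)
  rw [sim_comm]
  exact hgap pr.1 (Finset.mem_product.mp hpr).1 pr.2 (Finset.mem_product.mp hpr).2 q hq X' hX'

theorem stmt2_general {C E F : Type*} [DecidableEq C]
    [NormedAddCommGroup E] [InnerProductSpace ℝ E]
    [NormedAddCommGroup F] [InnerProductSpace ℝ F]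
    (f : C → E) (g : C → F) (𝕏 𝒳 : Finset C) (h𝒳 : 𝒳.Nonempty)
    (εf pf εg : ℝ)
    (hf : IsPrecise f 𝕏 𝒳 εf pf) (hεg : 0 < εg) (d' : C) (hd'X : d' ∈ 𝕏)
    (hattack : 𝒳.sup' h𝒳 (fun X => sim g d' X) ≤
      (𝒳 ×ˢ 𝒳).inf' (h𝒳.product h𝒳) (fun pr => sim g pr.1 pr.2) - εg) :
    d' ∈ 𝕏 \ 𝒳 ∧
      ∃ S : Finset C, S ⊆ 𝕏 \ 𝒳 ∧ pf * (((𝕏 \ 𝒳).card : ℝ)) ≤ (S.card : ℝ) ∧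
        (d' ∈ S → ∀ q ∈ 𝒳,
          sim f d' q ≤
            (𝒳 ×ˢ 𝒳).inf' (h𝒳.product h𝒳) (fun pr => sim f pr.1 pr.2) - εf) := by
  obtain ⟨Xε, hXε, hcard, hgap⟩ := hf
  exact ⟨Finset.mem_sdiff.mpr ⟨hd'X, notMem_of_sup'_le_inf'_sub (sim g) h𝒳 hεg hattack⟩,
    Xε, hXε, hcard, fun hd' _ hq => sim_le_inf'_sub_of_mem_witness f h𝒳 hgap hd' hq⟩

/-- Transferability of an attack on the surrogate `g` to the victim `f`: if `f` is
`ε_f`-`p_f`-Precise over `𝒳`, `ε_g > 0`, and `d' ∈ 𝕏` has maximal `g`-similarity to `𝒳`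
at least `ε_g` below the minimal within-topic `g`-similarity, then `d'` lies in the
complement `𝒳' = 𝕏 \ 𝒳`, and there is a subset `S ⊆ 𝒳'` with `|S| ≥ p_f · |𝒳'|` such
that whenever `d' ∈ S`, its `f`-similarity to every in-topic query `q` is at least
`ε_f` below the minimal within-topic `f`-similarity. -/
theorem stmt2 {C E F : Type*} [DecidableEq C]
    [NormedAddCommGroup E] [InnerProductSpace ℝ E]
    [NormedAddCommGroup F] [InnerProductSpace ℝ F]
    (f : C → E) (g : C → F) (𝕏 𝒳 : Finset C) (h𝒳X : 𝒳 ⊆ 𝕏) (h𝒳 : 𝒳.Nonempty)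
    (εf pf εg : ℝ) (hεf : 0 ≤ εf) (hpf0 : 0 ≤ pf) (hpf1 : pf ≤ 1)
    (hf : IsPrecise f 𝕏 𝒳 εf pf) (hεg : 0 < εg) (d' : C) (hd'X : d' ∈ 𝕏)
    (hattack : 𝒳.sup' h𝒳 (fun X => sim g d' X) ≤
      (𝒳 ×ˢ 𝒳).inf' (h𝒳.product h𝒳) (fun pr => sim g pr.1 pr.2) - εg) :
    d' ∈ 𝕏 \ 𝒳 ∧
      ∃ S : Finset C, S ⊆ 𝕏 \ 𝒳 ∧ pf * (((𝕏 \ 𝒳).card : ℝ)) ≤ (S.card : ℝ) ∧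
        (d' ∈ S → ∀ q ∈ 𝒳,
          sim f d' q ≤
            (𝒳 ×ˢ 𝒳).inf' (h𝒳.product h𝒳) (fun pr => sim f pr.1 pr.2) - εf) :=
  stmt2_general f g 𝕏 𝒳 h𝒳 εf pf εg hf hεg d' hd'X hattack
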